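/- For a reasonable strategy σ, the valuation V_σ is the limit of the decreasing sequence F_σ^i[V_⊥] (where V_⊥(⊥) = ō and V_⊥(s) = ∞ for s ∈ V), and this limit is reached after at most |V| iterations. -/

import Mathlib

/-!
The iterates decrease because `F_σ` is monotone and `F_σ[𝒱_⊥] ≼ 𝒱_⊥`.

Any `W` with `F_σ[W] ≼ W` (and `W(⊥) = ō`, `W ≠ -∞`) bounds `𝒱_σ` from above: if player 1
always moves to a successor of least `W`-value, then `℘(u) + W(u') ≼ W(u)` along every step
`u → u'`, so a play reaching `⊥` telescopes to a value `≼ W(s)`. An infinite play revisits a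
vertex, and the cycle in between has a positive profile because `σ` is reasonable, so a finite
`W`-value would have to strictly exceed itself; hence `W(s) = ∞`.

Conversely, against an optimal player 1, unfolding `F_σ^i[𝒱_⊥](s)` along the moves of player 1
and the `F_σ`-maximal moves of `σ` yields a play worth at least `F_σ^i[𝒱_⊥](s)`, unless the play
is still inside `V` after `i ≥ |V|` steps. In that case it has closed a cycle, and repeating the
cycle forever gives a play won by player 0, of value `∞`.
-/

open scoped Classical

/-- The order `≺` on integer color profiles `ℤ^d`: compare at the largest index where
they differ; at an even index the larger entry wins, at an odd index the smaller one. -/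
def FinLt {d : ℕ} (p q : Fin d → ℤ) : Prop :=
  ∃ k : Fin d, p k ≠ q k ∧ (∀ j, k < j → p j = q j) ∧
    ((Even (k : ℕ) ∧ p k < q k) ∨ (Odd (k : ℕ) ∧ q k < p k))

/-- Reflexive closure `≼` of `FinLt`. -/
def FinLe {d : ℕ} (p q : Fin d → ℤ) : Prop := p = q ∨ FinLt p q

/-- Color profiles: `ℤ^d` together with `-∞` (`bot`) and `∞` (`top`). -/
inductive Prof (d : ℕ) where
  | bot : Prof d
  | fin : (Fin d → ℤ) → Prof d
  | top : Prof d

/-- The order `≺` on color profiles: `-∞` is the bottom element, `∞` the top element,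
finite profiles are compared by `FinLt`. -/
def Prof.Lt {d : ℕ} : Prof d → Prof d → Prop
  | .bot, .bot => False
  | .bot, .fin _ => True
  | .bot, .top => True
  | .fin _, .bot => False
  | .fin p, .fin q => FinLt p q
  | .fin _, .top => True
  | .top, _ => False

/-- Reflexive closure `≼` of `Prof.Lt`. -/
def Prof.Le {d : ℕ} (p q : Prof d) : Prop := p = q ∨ Prof.Lt p q

/-- Adding a vector in `ℤ^d` to a profile; `±∞` are absorbing. -/
def Prof.add {d : ℕ} : Prof d → (Fin d → ℤ) → Prof d
  | .bot, _ => .bot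
  | .fin p, q => .fin (p + q)
  | .top, _ => .top

/-- A parity game arena: a finite directed graph, each node owned by player 0 or 1 and
colored by a color in `{0,…,d-1}`; every node has at least one successor. -/
structure PGA (V : Type) (d : ℕ) where
  edge : V → V → Prop
  owner : V → Fin 2
  color : V → Fin d
  succ : ∀ v, ∃ w, edge v w

variable {V : Type} {d : ℕ}

/-- The profile `℘(s)` of a single vertex: the unit vector at its color. -/
def unitProf (A : PGA V d) (s : V) : Fin d → ℤ := fun k => if A.color s = k then 1 else 0

/-- The color profile `℘(π)` of a finite sequence of vertices: how often each color occurs. -/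
def listProf (A : PGA V d) (L : List V) : Fin d → ℤ := fun k => ((L.map A.color).count k : ℤ)

/-- `℘(s) + p` for a vertex `s` and a profile `p`. -/
def addV (A : PGA V d) (s : V) (p : Prof d) : Prof d := p.add (unitProf A s)

/-- Edges of the escape arena `A_⊥` over `Option V`, where `none` is the sink `⊥`:
all edges of `A`, plus an edge from every player-0 node to `⊥`; `⊥` has no outgoing edges. -/
def EdgeB (A : PGA V d) : Option V → Option V → Prop
  | some u, some v => A.edge u v
  | some u, none => A.owner u = 0
  | none, _ => False

/-- A (memoryless, possibly non-deterministic) strategy of player 0 in `A_⊥`: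
a set of player-0 edges giving every player-0 node at least one successor. -/
def Strategy0 (A : PGA V d) (σ : V → Option V → Prop) : Prop :=
  (∀ s t, σ s t → A.owner s = 0 ∧ EdgeB A (some s) t) ∧
  (∀ s, A.owner s = 0 → ∃ t, σ s t)

/-- A (memoryless, possibly non-deterministic) strategy of player 1 (who never moves to `⊥`). -/
def Strategy1 (A : PGA V d) (τ : V → V → Prop) : Prop :=
  (∀ s t, τ s t → A.owner s = 1 ∧ A.edge s t) ∧
  (∀ s, A.owner s = 1 → ∃ t, τ s t)

/-- A strategy is deterministic if it picks at most one successor per node. -/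
def Deterministic (σ : V → Option V → Prop) : Prop :=
  ∀ s t t', σ s t → σ s t' → t = t'

/-- Edges of `A_⊥` restricted to a player-0 strategy `σ` that stay inside `V`
(cycles of `A_⊥|σ` never pass through `⊥`). -/
def EdgeSig (A : PGA V d) (σ : V → Option V → Prop) (u v : V) : Prop :=
  (A.owner u = 1 ∧ A.edge u v) ∨ σ u (some v)

/-- A (nonempty) cycle in `A_⊥|σ`: consecutive edges plus the wrap-around edge. -/
def CycleIn (A : PGA V d) (σ : V → Option V → Prop) (L : List V) : Prop :=
  L ≠ [] ∧ List.Chain' (EdgeSig A σ) L ∧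
  ∀ a b, L.head? = some a → L.getLast? = some b → EdgeSig A σ b a

/-- A player-0 strategy is reasonable if `A_⊥|σ` has no 1-dominated cycle,
i.e. on every cycle the dominating (maximal) color is even. -/
def Reasonable (A : PGA V d) (σ : V → Option V → Prop) : Prop :=
  ∀ L, CycleIn A σ L → ∀ v ∈ L, (∀ w ∈ L, A.color w ≤ A.color v) → Even ((A.color v : ℕ))

/-- One step of a play in `A_⊥` with player 0 using `σ` and player 1 using `τ`;
the sink `⊥` is absorbing. -/
def PlayStep (A : PGA V d) (σ : V → Option V → Prop) (τ : V → V → Prop) :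
    Option V → Option V → Prop
  | none, y => y = none
  | some u, y => (A.owner u = 0 ∧ σ u y) ∨ (A.owner u = 1 ∧ ∃ v, y = some v ∧ τ u v)

/-- A play from `s` in `A_⊥|σ,τ` (modelled with absorbing sink). -/
def IsPlay (A : PGA V d) (σ : V → Option V → Prop) (τ : V → V → Prop)
    (s : V) (π : ℕ → Option V) : Prop :=
  π 0 = some s ∧ ∀ n, PlayStep A σ τ (π n) (π (n + 1))

/-- One step of a play in `A_⊥` with player 0 using `σ`, player 1 unconstrained. -/
def PlayStepB (A : PGA V d) (σ : V → Option V → Prop) : Option V → Option V → Prop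
  | none, y => y = none
  | some u, y => (A.owner u = 0 ∧ σ u y) ∨ (A.owner u = 1 ∧ ∃ v, y = some v ∧ A.edge u v)

/-- A play from `s` in `A_⊥|σ` against an arbitrary player 1. -/
def IsPlayB (A : PGA V d) (σ : V → Option V → Prop) (s : V) (π : ℕ → Option V) : Prop :=
  π 0 = some s ∧ ∀ n, PlayStepB A σ (π n) (π (n + 1))

/-- Color `k` occurs at position `n` of the play `π`. -/
def ColorAt (A : PGA V d) (π : ℕ → Option V) (n : ℕ) (k : Fin d) : Prop :=
  ∃ v, π n = some v ∧ A.color v = k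

/-- An infinite play of `A_⊥` (never reaching `⊥`) is won by player 0 iff the maximal color
occurring infinitely often is even. -/
def Won0B (A : PGA V d) (π : ℕ → Option V) : Prop :=
  ∃ k : Fin d, Even ((k : ℕ)) ∧ (∀ N, ∃ n ≥ N, ColorAt A π n k) ∧
    ∀ j : Fin d, k < j → ∃ N, ∀ n ≥ N, ¬ ColorAt A π n j

/-- The value `℘(π)` of a play in `A_⊥`: for a finite play (reaching `⊥`), the color profile
of its vertices; for an infinite play, `∞` if player 0 wins it and `-∞` otherwise. -/
noncomputable def PlayValue (A : PGA V d) (π : ℕ → Option V) : Prof d :=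
  if h : ∃ n, π n = none then
    .fin (fun k =>
      (((Finset.range (Nat.find h)).filter (fun n => ColorAt A π n k)).card : ℤ))
  else if Won0B A π then .top else .bot

/-- `p` is the `≺`-maximum of the set `S` of profiles. -/
def IsMaxOf {d : ℕ} (S : Set (Prof d)) (p : Prof d) : Prop := p ∈ S ∧ ∀ q ∈ S, Prof.Le q p

/-- `p` is the `≺`-minimum of the set `S` of profiles. -/
def IsMinOf {d : ℕ} (S : Set (Prof d)) (p : Prof d) : Prop := p ∈ S ∧ ∀ q ∈ S, Prof.Le p q

/-- `W` is the valuation `𝒱_σ` of the player-0 strategy `σ`: `W(⊥) = ō`, and `W(s)` is the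
`≺`-minimal value player 1 can guarantee (by a memoryless strategy) in any play from `s`
in `A_⊥|σ`. -/
def IsValuation (A : PGA V d) (σ : V → Option V → Prop) (W : Option V → Prof d) : Prop :=
  W none = .fin 0 ∧
  ∀ s : V, IsMinOf
    { p | ∃ τ, Strategy1 A τ ∧
        IsMaxOf { q | ∃ π, IsPlay A σ τ s π ∧ q = PlayValue A π } p }
    (W (some s))

/-- `(s,t)` is an improvement of `σ` w.r.t. the valuation `W`: a player-0 edge with
`W(s) ≼ ℘(s) + W(t)`.  `I_σ` is the set (strategy) of all improvements. -/
def Improvement (A : PGA V d) (W : Option V → Prof d) (s : V) (t : Option V) : Prop :=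
  A.owner s = 0 ∧ EdgeB A (some s) t ∧ Prof.Le (W (some s)) (addV A s (W t))

/-- `(s,t)` is a strict improvement of `σ` w.r.t. `W`: a player-0 edge with
`W(s) ≺ ℘(s) + W(t)`. -/
def StrictImp (A : PGA V d) (W : Option V → Prof d) (s : V) (t : Option V) : Prop :=
  A.owner s = 0 ∧ EdgeB A (some s) t ∧ Prof.Lt (W (some s)) (addV A s (W t))

/-- A memoryless strategy of player 0 in the original parity game arena `A`. -/
def Strat0A (A : PGA V d) (σ : V → V → Prop) : Prop :=
  (∀ s t, σ s t → A.owner s = 0 ∧ A.edge s t) ∧ (∀ s, A.owner s = 0 → ∃ t, σ s t)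

/-- A play in `A` from `s` where player 0 follows `σ` and player 1 is unconstrained. -/
def PlayA (A : PGA V d) (σ : V → V → Prop) (s : V) (π : ℕ → V) : Prop :=
  π 0 = s ∧ ∀ n, (A.owner (π n) = 0 → σ (π n) (π (n + 1))) ∧
    (A.owner (π n) = 1 → A.edge (π n) (π (n + 1)))

/-- Parity winning condition in `A` for player 0: the maximal color seen infinitely often is even. -/
def Won0A (A : PGA V d) (π : ℕ → V) : Prop :=
  ∃ k : Fin d, Even ((k : ℕ)) ∧ (∀ N, ∃ n ≥ N, A.color (π n) = k) ∧
    ∀ j : Fin d, k < j → ∃ N, ∀ n ≥ N, A.color (π n) ≠ j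

/-- Player 0 wins the node `s` of the parity game arena `A` (with a memoryless strategy). -/
def Win0 (A : PGA V d) (s : V) : Prop :=
  ∃ σ, Strat0A A σ ∧ ∀ π, PlayA A σ s π → Won0A A π

/-- An acyclic path of `A_⊥` terminating in `⊥`: pairwise distinct vertices, consecutive
edges of `A`, and the last vertex owned by player 0 (so it has the edge to `⊥`). -/
def AcyclicToBot (A : PGA V d) (L : List V) : Prop :=
  L.Nodup ∧ List.Chain' A.edge L ∧ ∀ b, L.getLast? = some b → A.owner b = 0

/-- The Bellman-style operator `F_σ`, given as a relation between a valuation `W` and its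
image `FW`: `F_σ[W](⊥) = ō`; at a player-1 node, `℘(s)` plus the `≼`-minimum over
`E_1`-successors; at a player-0 node, `℘(s)` plus the `≼`-maximum over `σ`-successors. -/
def IsStep {V : Type} {d : ℕ} (A : PGA V d) (σ : V → Option V → Prop)
    (W FW : Option V → Prof d) : Prop :=
  FW none = .fin 0 ∧
  ∀ s : V,
    (A.owner s = 1 → ∃ m, IsMinOf { p | ∃ t, A.edge s t ∧ p = W (some t) } m ∧
      FW (some s) = addV A s m) ∧
    (A.owner s = 0 → ∃ m, IsMaxOf { p | ∃ t, σ s t ∧ p = W t } m ∧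
      FW (some s) = addV A s m)

namespace FinLt

variable {p q r : Fin d → ℤ}

theorem irrefl (p : Fin d → ℤ) : ¬ FinLt p p := fun ⟨_, hne, _⟩ => hne rfl

theorem add_right (h : FinLt p q) (r : Fin d → ℤ) : FinLt (p + r) (q + r) := by
  obtain ⟨k, hne, hup, hk⟩ := h
  refine ⟨k, by simpa using hne, fun j hj => by simp [hup j hj], ?_⟩
  simpa using hk

theorem trans (h₁ : FinLt p q) (h₂ : FinLt q r) : FinLt p r := by
  obtain ⟨k₁, hne₁, hup₁, hk₁⟩ := h₁
  obtain ⟨k₂, hne₂, hup₂, hk₂⟩ := h₂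
  rcases lt_trichotomy k₁ k₂ with hlt | rfl | hgt
  · have e : p k₂ = q k₂ := hup₁ k₂ hlt
    exact ⟨k₂, e ▸ hne₂, fun j hj => (hup₁ j (hlt.trans hj)).trans (hup₂ j hj), e ▸ hk₂⟩
  · have hk : (Even (k₁ : ℕ) ∧ p k₁ < r k₁) ∨ (Odd (k₁ : ℕ) ∧ r k₁ < p k₁) := by
      rcases hk₁ with ⟨he, h⟩ | ⟨ho, h⟩ <;> rcases hk₂ with ⟨he', h'⟩ | ⟨ho', h'⟩
      · exact Or.inl ⟨he, h.trans h'⟩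
      · exact absurd he (Nat.not_even_iff_odd.mpr ho')
      · exact absurd he' (Nat.not_even_iff_odd.mpr ho)
      · exact Or.inr ⟨ho, h'.trans h⟩
    refine ⟨k₁, ?_, fun j hj => (hup₁ j hj).trans (hup₂ j hj), hk⟩
    rcases hk with ⟨-, h⟩ | ⟨-, h⟩ <;> omega
  · have e : q k₁ = r k₁ := hup₂ k₁ hgt
    exact ⟨k₁, e ▸ hne₁, fun j hj => (hup₁ j hj).trans (hup₂ j (hgt.trans hj)), e ▸ hk₁⟩

theorem or_of_ne (h : p ≠ q) : FinLt p q ∨ FinLt q p := by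
  have hS : (Finset.univ.filter fun k => p k ≠ q k).Nonempty := by
    obtain ⟨k, hk⟩ := Function.ne_iff.mp h
    exact ⟨k, by simpa using hk⟩
  set k := (Finset.univ.filter fun k => p k ≠ q k).max' hS
  have hk : p k ≠ q k := by simpa using Finset.max'_mem _ hS
  have hup : ∀ j, k < j → p j = q j := fun j hj => by
    by_contra hj'
    exact (Finset.le_max' _ j (by simpa using hj')).not_gt hj
  have hup' : ∀ j, k < j → q j = p j := fun j hj => (hup j hj).symm
  rcases Nat.even_or_odd (k : ℕ) with he | ho <;> rcases hk.lt_or_gt with hlt | hgt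
  · exact Or.inl ⟨k, hk, hup, Or.inl ⟨he, hlt⟩⟩
  · exact Or.inr ⟨k, hk.symm, hup', Or.inl ⟨he, hgt⟩⟩
  · exact Or.inr ⟨k, hk.symm, hup', Or.inr ⟨ho, hlt⟩⟩
  · exact Or.inl ⟨k, hk, hup, Or.inr ⟨ho, hgt⟩⟩

end FinLt

namespace Prof

theorem Lt.irrefl (p : Prof d) : ¬ Prof.Lt p p := by
  cases p <;> simp [Prof.Lt, FinLt.irrefl]

theorem Lt.trans {p q r : Prof d} (h₁ : Prof.Lt p q) (h₂ : Prof.Lt q r) : Prof.Lt p r := by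
  cases p <;> cases q <;> cases r <;> simp_all [Prof.Lt]
  exact h₁.trans h₂

theorem Lt.or_of_ne {p q : Prof d} (h : p ≠ q) : Prof.Lt p q ∨ Prof.Lt q p := by
  cases p <;> cases q <;> simp_all [Prof.Lt]
  exact FinLt.or_of_ne h

noncomputable instance : LinearOrder (Prof d) where
  le := Prof.Le
  lt := Prof.Lt
  le_refl _ := Or.inl rfl
  le_trans _ _ _ := by
    rintro (rfl | h₁) (rfl | h₂)
    exacts [Or.inl rfl, Or.inr h₂, Or.inr h₁, Or.inr (h₁.trans h₂)]
  le_antisymm p _ := by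
    rintro (rfl | h₁) (h₂ | h₂)
    exacts [rfl, rfl, h₂.symm, absurd (h₁.trans h₂) (Lt.irrefl p)]
  le_total p q := by
    by_cases h : p = q
    · exact Or.inl (Or.inl h)
    · exact (Lt.or_of_ne h).imp Or.inr Or.inr
  lt_iff_le_not_ge p q := by
    refine ⟨fun h => ⟨Or.inr h, ?_⟩, ?_⟩
    · rintro (rfl | h')
      exacts [Lt.irrefl _ h, Lt.irrefl _ (h.trans h')]
    · rintro ⟨rfl | h, h'⟩
      exacts [absurd (Or.inl rfl) h', h]
  toDecidableLE := Classical.decRel _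

theorem le_top (p : Prof d) : p ≤ .top := by
  cases p <;> first | exact Or.inl rfl | exact Or.inr trivial

theorem eq_top_of_top_le {p : Prof d} (h : .top ≤ p) : p = .top :=
  le_antisymm (le_top p) h

theorem add_le_add_right {p q : Prof d} (h : p ≤ q) (r : Fin d → ℤ) : p.add r ≤ q.add r := by
  rcases h with rfl | h
  · exact le_rfl
  cases p <;> cases q <;> simp only [Prof.Lt] at h <;> first
    | exact Or.inr trivial | exact le_top _ | exact Or.inr (h.add_right r)

theorem add_ne_bot {p : Prof d} (h : p ≠ .bot) (r : Fin d → ℤ) : p.add r ≠ .bot := by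
  cases p <;> simp_all [Prof.add]

theorem add_zero (p : Prof d) : p.add 0 = p := by
  cases p <;> simp [Prof.add]

theorem add_add (p : Prof d) (a b : Fin d → ℤ) : (p.add a).add b = p.add (a + b) := by
  cases p <;> simp [Prof.add, add_assoc]

theorem fin_lt_fin_add {v c : Fin d → ℤ} (h : FinLt 0 c) : Prof.fin v < .fin (v + c) := by
  show FinLt _ _
  simpa [add_comm c] using h.add_right v

end Prof

theorem IsMinOf.le {S : Set (Prof d)} {p q : Prof d} (h : IsMinOf S p) (hq : q ∈ S) : p ≤ q :=
  h.2 q hq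

theorem IsMaxOf.le {S : Set (Prof d)} {p q : Prof d} (h : IsMaxOf S p) (hq : q ∈ S) : q ≤ p :=
  h.2 q hq

open Filter in
theorem frequently_add_one_iff {P : ℕ → Prop} :
    (∀ N, ∃ n ≥ N, P (n + 1)) ↔ ∀ N, ∃ n ≥ N, P n := by
  rw [← frequently_atTop, ← frequently_atTop]
  conv_rhs => rw [← map_add_atTop_eq_nat 1]
  exact frequently_map.symm

open Filter in
theorem eventually_add_one_iff {P : ℕ → Prop} :
    (∃ N, ∀ n ≥ N, P (n + 1)) ↔ ∃ N, ∀ n ≥ N, P n := by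
  rw [← eventually_atTop, ← eventually_atTop]
  conv_rhs => rw [← map_add_atTop_eq_nat 1]
  exact eventually_map.symm

section Plays

variable {A : PGA V d} {σ : V → Option V → Prop} {τ : V → V → Prop}

def playValues (A : PGA V d) (σ : V → Option V → Prop) (τ : V → V → Prop) (s : V) :
    Set (Prof d) :=
  {q | ∃ π, IsPlay A σ τ s π ∧ q = PlayValue A π}

noncomputable def prefixProf (A : PGA V d) (π : ℕ → Option V) (k : ℕ) : Fin d → ℤ :=
  fun c => (((Finset.range k).filter fun n => ColorAt A π n c).card : ℤ)

def consPlay (s : V) (π : ℕ → Option V) : ℕ → Option V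
  | 0 => some s
  | n + 1 => π n

theorem prefixProf_zero (A : PGA V d) (π : ℕ → Option V) : prefixProf A π 0 = 0 := by
  ext c
  simp [prefixProf]

theorem colorAt_iff_of_eq_some {π : ℕ → Option V} {n : ℕ} {u : V} (h : π n = some u)
    (c : Fin d) : ColorAt A π n c ↔ A.color u = c := by
  simp [ColorAt, h]

theorem prefixProf_succ_of_eq_some {π : ℕ → Option V} {k : ℕ} {u : V} (h : π k = some u) :
    prefixProf A π (k + 1) = prefixProf A π k + unitProf A u := by
  ext c
  simp only [prefixProf, Finset.range_add_one, Finset.filter_insert, colorAt_iff_of_eq_some h,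
    Pi.add_apply, unitProf]
  split_ifs
  · rw [Finset.card_insert_of_notMem (by simp)]
    push_cast
    rfl
  · simp

theorem prefixProf_succ_of_eq_none {π : ℕ → Option V} {k : ℕ} (h : π k = none) :
    prefixProf A π (k + 1) = prefixProf A π k := by
  ext c
  simp only [prefixProf, Finset.range_add_one, Finset.filter_insert]
  rw [if_neg (by simp [ColorAt, h])]

theorem prefixProf_consPlay (s : V) (π : ℕ → Option V) (k : ℕ) :
    prefixProf A (consPlay s π) (k + 1) = prefixProf A π k + unitProf A s := by
  induction k with
  | zero => rw [prefixProf_succ_of_eq_some (rfl : consPlay s π 0 = _), prefixProf_zero,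
      prefixProf_zero]
  | succ k ih =>
    cases hk : π k with
    | none =>
      rw [prefixProf_succ_of_eq_none (show consPlay s π (k + 1) = none from hk), ih,
        prefixProf_succ_of_eq_none hk]
    | some u =>
      rw [prefixProf_succ_of_eq_some (show consPlay s π (k + 1) = some u from hk), ih,
        prefixProf_succ_of_eq_some hk, add_right_comm]

theorem playValue_of_eq_none {π : ℕ → Option V} {m : ℕ} (h : π m = none)
    (hmin : ∀ j < m, π j ≠ none) : PlayValue A π = .fin (prefixProf A π m) := by
  have hex : ∃ n, π n = none := ⟨m, h⟩
  rw [PlayValue, dif_pos hex, (Nat.find_eq_iff hex).mpr ⟨h, hmin⟩]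
  rfl

theorem playValue_of_forall_ne_none {π : ℕ → Option V} (h : ∀ n, π n ≠ none) :
    PlayValue A π = if Won0B A π then .top else .bot := by
  rw [PlayValue, dif_neg (not_exists.mpr h)]

theorem won0B_consPlay_iff (s : V) (π : ℕ → Option V) :
    Won0B A (consPlay s π) ↔ Won0B A π := by
  have hshift : ∀ n c, ColorAt A (consPlay s π) (n + 1) c ↔ ColorAt A π n c :=
    fun _ _ => Iff.rfl
  simp only [Won0B, ← frequently_add_one_iff (P := fun n => ColorAt A (consPlay s π) n _),
    ← eventually_add_one_iff (P := fun n => ¬ ColorAt A (consPlay s π) n _), hshift]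

theorem playValue_consPlay (s : V) (π : ℕ → Option V) :
    PlayValue A (consPlay s π) = addV A s (PlayValue A π) := by
  by_cases hex : ∃ m, π m = none
  · have hmin : ∀ j < Nat.find hex, π j ≠ none := fun j hj => Nat.find_min hex hj
    rw [playValue_of_eq_none (Nat.find_spec hex) hmin,
      playValue_of_eq_none (m := Nat.find hex + 1) (Nat.find_spec hex), prefixProf_consPlay]
    · simp [addV, Prof.add]
    · rintro (_ | j) hj
      exacts [Option.some_ne_none s, hmin j (by omega)]
  · push Not at hex
    have hex' : ∀ n, consPlay s π n ≠ none := by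
      rintro (_ | n)
      exacts [Option.some_ne_none s, hex n]
    rw [playValue_of_forall_ne_none hex, playValue_of_forall_ne_none hex',
      won0B_consPlay_iff]
    split_ifs <;> rfl

theorem playValue_const_none (A : PGA V d) : PlayValue A (fun _ => none) = .fin 0 := by
  rw [playValue_of_eq_none (m := 0) rfl (by simp), prefixProf_zero]

theorem edgeSig_of_playStep (hτ : Strategy1 A τ) {u v : V}
    (h : PlayStep A σ τ (some u) (some v)) : EdgeSig A σ u v := by
  rcases h with ⟨-, hσ⟩ | ⟨h1, w, hw, hτw⟩
  · exact Or.inr hσ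
  · cases hw
    exact Or.inl ⟨h1, (hτ.1 u v hτw).2⟩

theorem IsPlay.exists_walk (hτ : Strategy1 A τ) {s : V} {π : ℕ → Option V}
    (hπ : IsPlay A σ τ s π) {b : ℕ} (hsome : ∀ j ≤ b, π j ≠ none) :
    ∃ g : ℕ → V, (∀ j ≤ b, π j = some (g j)) ∧ ∀ j < b, EdgeSig A σ (g j) (g (j + 1)) := by
  have hπg : ∀ j ≤ b, π j = some ((π j).getD s) := fun j hj =>
    (Option.getD_of_ne_none (hsome j hj) s).symm
  refine ⟨fun j => (π j).getD s, hπg, fun j hj => edgeSig_of_playStep hτ ?_⟩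
  rw [← hπg j hj.le, ← hπg (j + 1) hj]
  exact hπ.2 j

theorem IsPlay.shift {s u : V} {π : ℕ → Option V} (hπ : IsPlay A σ τ s π) {a : ℕ}
    (h : π a = some u) : IsPlay A σ τ u (fun n => π (a + n)) :=
  ⟨h, fun n => hπ.2 (a + n)⟩

theorem exists_run (hσ : Strategy0 A σ) (hτ : Strategy1 A τ) (x : Option V) :
    ∃ π : ℕ → Option V, π 0 = x ∧ ∀ n, PlayStep A σ τ (π n) (π (n + 1)) := by
  have hnext : ∀ y : Option V, ∃ z, PlayStep A σ τ y z := by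
    rintro (_ | u)
    · exact ⟨none, rfl⟩
    · rcases (by omega : A.owner u = 0 ∨ A.owner u = 1) with h | h
      · obtain ⟨t, ht⟩ := hσ.2 u h
        exact ⟨t, Or.inl ⟨h, ht⟩⟩
      · obtain ⟨t, ht⟩ := hτ.2 u h
        exact ⟨some t, Or.inr ⟨h, t, rfl, ht⟩⟩
  choose next hnext using hnext
  exact ⟨fun n => next^[n] x, rfl, fun n => by
    simpa only [Function.iterate_succ_apply'] using hnext _⟩

theorem IsPlay.eq_none_of_le {s : V} {π : ℕ → Option V} (hπ : IsPlay A σ τ s π) {m k : ℕ}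
    (hm : π m = none) (hk : m ≤ k) : π k = none := by
  induction k, hk using Nat.le_induction with
  | base => exact hm
  | succ k _ ih => simpa [ih, PlayStep] using hπ.2 k

theorem add_prefixProf_le {W : Option V → Prof d}
    (hW : ∀ u y, PlayStep A σ τ (some u) y → addV A u (W y) ≤ W (some u))
    {s : V} {π : ℕ → Option V} (hπ : IsPlay A σ τ s π) (k : ℕ) :
    (W (π k)).add (prefixProf A π k) ≤ W (some s) := by
  induction k with
  | zero => rw [hπ.1, prefixProf_zero, Prof.add_zero]
  | succ k ih =>
    cases hk : π k with
    | none =>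
      rw [hπ.eq_none_of_le hk k.le_succ, prefixProf_succ_of_eq_none hk]
      rwa [hk] at ih
    | some u =>
      have hstep : PlayStep A σ τ (some u) (π (k + 1)) := hk ▸ hπ.2 k
      have e : (W (π (k + 1))).add (prefixProf A π k + unitProf A u) =
          (addV A u (W (π (k + 1)))).add (prefixProf A π k) := by
        rw [addV, Prof.add_add, add_comm (unitProf A u)]
      rw [prefixProf_succ_of_eq_some hk, e]
      rw [hk] at ih
      exact (Prof.add_le_add_right (hW u _ hstep) _).trans ih

end Plays

/-- The index sequence `0, 1, …, b - 1, a, …, b - 1, a, …` that runs through `[0, b)` once and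
then cycles through `[a, b)`. -/
def loopIdx (a b n : ℕ) : ℕ := if n < a then n else a + (n - a) % (b - a)

section LoopIdx

variable {a b : ℕ}

theorem loopIdx_zero : loopIdx a b 0 = 0 := by
  unfold loopIdx
  split_ifs <;> simp_all

theorem loopIdx_lt (hab : a < b) (n : ℕ) : loopIdx a b n < b := by
  unfold loopIdx
  have := Nat.mod_lt (n - a) (Nat.sub_pos_of_lt hab)
  split_ifs <;> omega

theorem le_loopIdx {n : ℕ} (h : a ≤ n) : a ≤ loopIdx a b n := by
  unfold loopIdx
  split_ifs <;> omega

theorem loopIdx_add_mul {j : ℕ} (hj : a ≤ j) (hjb : j < b) (m : ℕ) :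
    loopIdx a b (j + m * (b - a)) = j := by
  rw [loopIdx, if_neg (by omega), show j + m * (b - a) - a = j - a + m * (b - a) by
    rw [Nat.add_comm j, Nat.add_sub_assoc hj, Nat.add_comm], Nat.add_mul_mod_self_right,
    Nat.mod_eq_of_lt (by omega)]
  omega

theorem loopIdx_succ (hab : a < b) (n : ℕ) :
    loopIdx a b (n + 1) = loopIdx a b n + 1 ∨
      (loopIdx a b n + 1 = b ∧ loopIdx a b (n + 1) = a) := by
  unfold loopIdx
  rcases Nat.lt_or_ge n a with hn | hn
  · left
    by_cases h : n + 1 < a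
    · simp [h, hn]
    · rw [if_pos hn, if_neg h, show n + 1 - a = 0 by omega, Nat.zero_mod]
      omega
  rw [if_neg (by omega), if_neg (by omega)]
  obtain ⟨t, r, hr, hna⟩ : ∃ t r, r < b - a ∧ n - a = (b - a) * t + r :=
    ⟨_, _, Nat.mod_lt _ (by omega), (Nat.div_add_mod _ _).symm⟩
  rw [hna, Nat.mul_add_mod, Nat.mod_eq_of_lt hr]
  rcases Nat.lt_or_ge (r + 1) (b - a) with hr' | hr'
  · left
    rw [show n + 1 - a = (b - a) * t + (r + 1) by omega, Nat.mul_add_mod,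
      Nat.mod_eq_of_lt hr']
    omega
  · right
    rw [show n + 1 - a = (b - a) * (t + 1) by rw [Nat.mul_succ]; omega, Nat.mul_mod_right]
    omega

end LoopIdx

section Cycles

variable {A : PGA V d} {σ : V → Option V → Prop}

theorem exists_lt_le_card_eq [Fintype V] (g : ℕ → V) :
    ∃ a b, a < b ∧ b ≤ Fintype.card V ∧ g a = g b := by
  obtain ⟨x, y, hxy, hg⟩ :=
    Fintype.exists_ne_map_eq_of_card_lt (fun j : Fin (Fintype.card V + 1) => g j) (by simp)
  rcases Fin.lt_or_lt_of_ne hxy with h | h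
  · exact ⟨x, y, h, Nat.lt_succ_iff.mp y.isLt, hg⟩
  · exact ⟨y, x, h, Nat.lt_succ_iff.mp x.isLt, hg.symm⟩

theorem cycleIn_map_range {g : ℕ → V} {q : ℕ} (hq : 0 < q)
    (hwalk : ∀ j < q, EdgeSig A σ (g j) (g (j + 1))) (hwrap : g q = g 0) :
    CycleIn A σ ((List.range q).map g) := by
  obtain ⟨m, rfl⟩ : ∃ m, q = m + 1 := ⟨q - 1, by omega⟩
  refine ⟨by simp, (List.isChain_map g).mpr ((List.isChain_range _ _).mpr
    fun j hj => hwalk j (by omega)), ?_⟩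
  intro x y hx hy
  rw [List.range_succ_eq_map, List.map_cons, List.head?_cons] at hx
  rw [List.range_succ, List.map_append, List.map_singleton, List.getLast?_concat] at hy
  cases hx
  cases hy
  simpa [hwrap] using hwalk m (by omega)

theorem Reasonable.even_color_of_forall_le (hreas : Reasonable A σ) {g : ℕ → V} {q : ℕ}
    (hq : 0 < q) (hwalk : ∀ j < q, EdgeSig A σ (g j) (g (j + 1))) (hwrap : g q = g 0)
    {j₀ : ℕ} (hj₀ : j₀ < q) (hmax : ∀ j < q, A.color (g j) ≤ A.color (g j₀)) :
    Even (A.color (g j₀) : ℕ) :=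
  hreas _ (cycleIn_map_range hq hwalk hwrap) _ (List.mem_map_of_mem (List.mem_range.mpr hj₀))
    (by simpa using hmax)

/-- The dominating color of the cycle is even and occurs in it. -/
theorem Reasonable.finLt_zero_prefixProf (hreas : Reasonable A σ) {π : ℕ → Option V}
    {g : ℕ → V} {q : ℕ} (hq : 0 < q) (hπg : ∀ j < q, π j = some (g j))
    (hwalk : ∀ j < q, EdgeSig A σ (g j) (g (j + 1))) (hwrap : g q = g 0) :
    FinLt 0 (prefixProf A π q) := by
  obtain ⟨j₀, hj₀, hmax⟩ := (Finset.range q).exists_max_image (fun j => A.color (g j))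
    ⟨0, Finset.mem_range.mpr hq⟩
  simp only [Finset.mem_range] at hj₀ hmax
  have hcount : ∀ c, prefixProf A π q c = ((Finset.range q).filter
      fun j => A.color (g j) = c).card := fun c => by
    simp only [prefixProf]
    congr 2
    exact Finset.filter_congr fun j hj =>
      colorAt_iff_of_eq_some (hπg j (Finset.mem_range.mp hj)) c
  have hpos : 0 < prefixProf A π q (A.color (g j₀)) := by
    rw [hcount]
    exact_mod_cast Finset.card_pos.mpr ⟨j₀, by simp [hj₀]⟩
  refine ⟨A.color (g j₀), hpos.ne, fun c hc => ?_,
    Or.inl ⟨hreas.even_color_of_forall_le hq hwalk hwrap hj₀ hmax, hpos⟩⟩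
  rw [hcount, Pi.zero_apply, eq_comm, Nat.cast_eq_zero, Finset.card_eq_zero,
    Finset.filter_eq_empty_iff]
  exact fun j hj hjc => (hmax j (Finset.mem_range.mp hj)).not_gt (hjc ▸ hc)

theorem Reasonable.won0B_loop (hreas : Reasonable A σ) {g : ℕ → V} {a b : ℕ} (hab : a < b)
    (hwalk : ∀ j < b, EdgeSig A σ (g j) (g (j + 1))) (hgab : g a = g b) :
    Won0B A (fun n => some (g (loopIdx a b n))) := by
  obtain ⟨j₀, hj₀, hmax⟩ := (Finset.range (b - a)).exists_max_image
    (fun j => A.color (g (a + j))) ⟨0, Finset.mem_range.mpr (by omega)⟩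
  simp only [Finset.mem_range] at hj₀ hmax
  have heven := hreas.even_color_of_forall_le (g := fun j => g (a + j)) (by omega)
    (fun j hj => by simpa only [Nat.add_assoc] using hwalk (a + j) (by omega))
    (by simpa [show a + (b - a) = b by omega] using hgab.symm) hj₀ hmax
  simp only [Won0B, ColorAt, Option.some.injEq, exists_eq_left']
  refine ⟨A.color (g (a + j₀)), heven, fun N => ⟨a + j₀ + N * (b - a), ?_, ?_⟩,
    fun c hc => ⟨a, fun n hn h => ?_⟩⟩
  · have := Nat.le_mul_of_pos_right N (show 0 < b - a by omega)
    omega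
  · rw [loopIdx_add_mul (by omega) (by omega)]
  · have h₁ := le_loopIdx (b := b) hn
    have h₂ := loopIdx_lt hab n
    have := hmax (loopIdx a b n - a) (by omega)
    rw [Nat.add_sub_cancel' h₁, h] at this
    exact this.not_gt hc

end Cycles

section PlayValues

variable [Fintype V] {A : PGA V d} {σ : V → Option V → Prop} {τ : V → V → Prop}

theorem IsPlay.exists_playValue_eq_top (hreas : Reasonable A σ) (hτ : Strategy1 A τ) {s : V}
    {π : ℕ → Option V} (hπ : IsPlay A σ τ s π) (hsome : ∀ j ≤ Fintype.card V, π j ≠ none) :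
    ∃ ρ, IsPlay A σ τ s ρ ∧ PlayValue A ρ = .top := by
  obtain ⟨g, hπg, hwalk⟩ := hπ.exists_walk hτ hsome
  obtain ⟨a, b, hab, hb, hgab⟩ := exists_lt_le_card_eq g
  have hnext : ∀ n, g (loopIdx a b (n + 1)) = g (loopIdx a b n + 1) := fun n => by
    rcases loopIdx_succ hab n with h | ⟨h, h'⟩
    · rw [h]
    · rw [h, h', hgab]
  refine ⟨fun n => some (g (loopIdx a b n)), ⟨?_, fun n => ?_⟩, ?_⟩
  · show some (g (loopIdx a b 0)) = some s
    rw [loopIdx_zero, ← hπg 0 (Nat.zero_le _), hπ.1]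
  · have hfb := loopIdx_lt hab n
    simp only
    rw [hnext, ← hπg _ (by omega), ← hπg _ (by omega)]
    exact hπ.2 _
  · rw [playValue_of_forall_ne_none (fun _ => Option.some_ne_none _),
      if_pos (hreas.won0B_loop hab (fun j hj => hwalk j (by omega)) hgab)]

/-- Either some play stays in `V` for `|V|` steps, and then a looping play has value `∞`, or all
plays reach `⊥` within `|V|` steps, and then only finitely many values occur. -/
theorem exists_isMaxOf_playValues (hσ : Strategy0 A σ) (hτ : Strategy1 A τ)
    (hreas : Reasonable A σ) (s : V) : ∃ M, IsMaxOf (playValues A σ τ s) M := by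
  by_cases hlong : ∃ π, IsPlay A σ τ s π ∧ ∀ j ≤ Fintype.card V, π j ≠ none
  · obtain ⟨π, hπ, hsome⟩ := hlong
    obtain ⟨ρ, hρ, htop⟩ := hπ.exists_playValue_eq_top hreas hτ hsome
    exact ⟨.top, ⟨ρ, hρ, htop.symm⟩, fun q _ => Prof.le_top q⟩
  push Not at hlong
  set n := Fintype.card V
  have hsub : playValues A σ τ s ⊆ Set.range fun f : Fin (n + 1) → Option V =>
      PlayValue A fun m => if h : m < n + 1 then f ⟨m, h⟩ else none := by
    rintro _ ⟨π, hπ, rfl⟩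
    obtain ⟨j, hj, hπj⟩ := hlong π hπ
    refine ⟨fun m => π m, congrArg (PlayValue A) (funext fun m => ?_)⟩
    split_ifs with h
    · rfl
    · exact (hπ.eq_none_of_le hπj (by omega)).symm
  obtain ⟨π, hπ0, hπ⟩ := exists_run hσ hτ (some s)
  obtain ⟨M, hM, hmax⟩ := Set.exists_max_image _ id ((Set.finite_range _).subset hsub)
    ⟨_, π, ⟨hπ0, hπ⟩, rfl⟩
  exact ⟨M, hM, hmax⟩

theorem playValue_le_of_forall_playStep (hreas : Reasonable A σ) (hτ : Strategy1 A τ)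
    {W : Option V → Prof d}
    (hW : ∀ u y, PlayStep A σ τ (some u) y → addV A u (W y) ≤ W (some u))
    (hnone : W none = .fin 0) (hnb : ∀ x, W x ≠ .bot) {s : V} {π : ℕ → Option V}
    (hπ : IsPlay A σ τ s π) : PlayValue A π ≤ W (some s) := by
  by_cases hex : ∃ m, π m = none
  · rw [playValue_of_eq_none (Nat.find_spec hex) fun j hj => Nat.find_min hex hj]
    simpa [Nat.find_spec hex, hnone, Prof.add] using add_prefixProf_le hW hπ (Nat.find hex)
  push Not at hex
  obtain ⟨g, hπg, hwalk⟩ := hπ.exists_walk hτ (b := Fintype.card V) fun j _ => hex j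
  obtain ⟨a, b, hab, hb, hgab⟩ := exists_lt_le_card_eq g
  have hπa : π a = some (g a) := hπg a (by omega)
  cases hWa : W (some (g a)) with
  | bot => exact absurd hWa (hnb _)
  | top =>
    have := add_prefixProf_le hW hπ a
    rw [hπa, hWa] at this
    rw [Prof.eq_top_of_top_le this]
    exact Prof.le_top _
  | fin v =>
    exfalso
    have hcycle := add_prefixProf_le hW (hπ.shift hπa) (b - a)
    rw [show a + (b - a) = b by omega, hπg b hb, ← hgab, hWa] at hcycle
    have hpos : FinLt 0 (prefixProf A (fun n => π (a + n)) (b - a)) :=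
      hreas.finLt_zero_prefixProf (g := fun j => g (a + j)) (by omega)
        (fun j hj => hπg (a + j) (by omega))
        (fun j hj => by simpa only [Nat.add_assoc] using hwalk (a + j) (by omega))
        (by simpa [show a + (b - a) = b by omega] using hgab.symm)
    exact (Prof.fin_lt_fin_add hpos).not_ge hcycle

end PlayValues

section Iterates

variable {A : PGA V d} {σ : V → Option V → Prop} {W W' FW FW' : Option V → Prof d}

theorem IsStep.mono (hF : IsStep A σ W FW) (hF' : IsStep A σ W' FW') (h : ∀ x, W x ≤ W' x) :
    ∀ x, FW x ≤ FW' x := by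
  rintro (_ | s)
  · rw [hF.1, hF'.1]
  rcases (by omega : A.owner s = 0 ∨ A.owner s = 1) with hs | hs
  · obtain ⟨m, hm, hFs⟩ := (hF.2 s).2 hs
    obtain ⟨m', hm', hFs'⟩ := (hF'.2 s).2 hs
    obtain ⟨t, ht, rfl⟩ := hm.1
    rw [hFs, hFs']
    exact Prof.add_le_add_right ((h t).trans (hm'.le ⟨t, ht, rfl⟩)) _
  · obtain ⟨m, hm, hFs⟩ := (hF.2 s).1 hs
    obtain ⟨m', hm', hFs'⟩ := (hF'.2 s).1 hs
    obtain ⟨t, ht, rfl⟩ := hm'.1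
    rw [hFs, hFs']
    exact Prof.add_le_add_right ((hm.le ⟨t, ht, rfl⟩).trans (h _)) _

theorem IsStep.ne_bot (hF : IsStep A σ W FW) (h : ∀ x, W x ≠ .bot) : ∀ x, FW x ≠ .bot := by
  rintro (_ | s)
  · simp [hF.1]
  rcases (by omega : A.owner s = 0 ∨ A.owner s = 1) with hs | hs
  · obtain ⟨m, ⟨⟨t, -, rfl⟩, -⟩, hFs⟩ := (hF.2 s).2 hs
    exact hFs ▸ Prof.add_ne_bot (h t) _
  · obtain ⟨m, ⟨⟨t, -, rfl⟩, -⟩, hFs⟩ := (hF.2 s).1 hs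
    exact hFs ▸ Prof.add_ne_bot (h _) _

def greedyStrategy1 (A : PGA V d) (W : Option V → Prof d) (u v : V) : Prop :=
  A.owner u = 1 ∧ A.edge u v ∧ ∀ t, A.edge u t → W (some v) ≤ W (some t)

theorem IsStep.strategy1_greedy (hF : IsStep A σ W FW) : Strategy1 A (greedyStrategy1 A W) := by
  refine ⟨fun u v h => ⟨h.1, h.2.1⟩, fun u hu => ?_⟩
  obtain ⟨m, hm, -⟩ := (hF.2 u).1 hu
  obtain ⟨t, ht, rfl⟩ := hm.1
  exact ⟨t, hu, ht, fun t' ht' => hm.le ⟨t', ht', rfl⟩⟩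

theorem IsStep.addV_le_of_playStep (hF : IsStep A σ W FW) {u : V} {y : Option V}
    (h : PlayStep A σ (greedyStrategy1 A W) (some u) y) : addV A u (W y) ≤ FW (some u) := by
  rcases h with ⟨hu, hy⟩ | ⟨hu, v, rfl, -, -, hv⟩
  · obtain ⟨m, hm, hFu⟩ := (hF.2 u).2 hu
    exact hFu ▸ Prof.add_le_add_right (hm.le ⟨y, hy, rfl⟩) _
  · obtain ⟨m, hm, hFu⟩ := (hF.2 u).1 hu
    obtain ⟨t, ht, rfl⟩ := hm.1
    exact hFu ▸ Prof.add_le_add_right (hv t ht) _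

theorem IsValuation.le_of_isStep_le [Fintype V] {Vσ : Option V → Prof d}
    (hσ : Strategy0 A σ) (hreas : Reasonable A σ) (hV : IsValuation A σ Vσ)
    (hF : IsStep A σ W FW) (hle : ∀ x, FW x ≤ W x) (hnone : W none = .fin 0)
    (hnb : ∀ x, W x ≠ .bot) (s : V) : Vσ (some s) ≤ W (some s) := by
  have hτ := hF.strategy1_greedy
  obtain ⟨M, hM⟩ := exists_isMaxOf_playValues hσ hτ hreas s
  obtain ⟨π, hπ, rfl⟩ := hM.1
  exact ((hV.2 s).le ⟨_, hτ, hM⟩).trans <| playValue_le_of_forall_playStep hreas hτ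
    (fun u y h => (hF.addV_le_of_playStep h).trans (hle _)) hnone hnb hπ

end Iterates

section BellmanFord

variable {A : PGA V d} {σ : V → Option V → Prop} {W : ℕ → Option V → Prof d}

theorem exists_run_le_playValue_or_ne_none {τ : V → V → Prop} (hσ : Strategy0 A σ)
    (hτ : Strategy1 A τ) (hnone : ∀ i, W i none = .fin 0)
    (hstep : ∀ i, IsStep A σ (W i) (W (i + 1))) (i : ℕ) (x : Option V) :
    ∃ π : ℕ → Option V, π 0 = x ∧ (∀ n, PlayStep A σ τ (π n) (π (n + 1))) ∧
      (W i x ≤ PlayValue A π ∨ ∀ j ≤ i, π j ≠ none) := by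
  induction i generalizing x with
  | zero =>
    rcases x with _ | s
    · exact ⟨fun _ => none, rfl, fun _ => rfl, Or.inl (by rw [hnone, playValue_const_none])⟩
    obtain ⟨π, hπ0, hπ⟩ := exists_run hσ hτ (some s)
    exact ⟨π, hπ0, hπ, Or.inr fun j hj => by simp [Nat.le_zero.mp hj, hπ0]⟩
  | succ i ih =>
    rcases x with _ | s
    · exact ⟨fun _ => none, rfl, fun _ => rfl, Or.inl (by rw [hnone, playValue_const_none])⟩
    obtain ⟨y, hsy, hle⟩ : ∃ y, PlayStep A σ τ (some s) y ∧
        W (i + 1) (some s) ≤ addV A s (W i y) := by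
      rcases (by omega : A.owner s = 0 ∨ A.owner s = 1) with hs | hs
      · obtain ⟨m, ⟨⟨t, ht, rfl⟩, -⟩, hFs⟩ := ((hstep i).2 s).2 hs
        exact ⟨t, Or.inl ⟨hs, ht⟩, hFs.le⟩
      · obtain ⟨t, ht⟩ := hτ.2 s hs
        obtain ⟨m, hm, hFs⟩ := ((hstep i).2 s).1 hs
        exact ⟨some t, Or.inr ⟨hs, t, rfl, ht⟩,
          hFs ▸ Prof.add_le_add_right (hm.le ⟨t, (hτ.1 s t ht).2, rfl⟩) _⟩
    obtain ⟨ρ, hρ0, hρ, hρv⟩ := ih y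
    refine ⟨consPlay s ρ, rfl, ?_, ?_⟩
    · rintro (_ | n)
      exacts [show PlayStep A σ τ (some s) (ρ 0) from hρ0 ▸ hsy, hρ n]
    · rcases hρv with h | h
      · exact Or.inl (playValue_consPlay s ρ ▸ hle.trans (Prof.add_le_add_right h _))
      · refine Or.inr ?_
        rintro (_ | j) hj
        exacts [Option.some_ne_none s, h j (by omega)]

theorem IsValuation.iterate_le [Fintype V] {Vσ : Option V → Prof d} (hσ : Strategy0 A σ)
    (hreas : Reasonable A σ) (hV : IsValuation A σ Vσ) (hnone : ∀ i, W i none = .fin 0)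
    (hstep : ∀ i, IsStep A σ (W i) (W (i + 1))) {i : ℕ} (hi : Fintype.card V ≤ i) (s : V) :
    W i (some s) ≤ Vσ (some s) := by
  obtain ⟨τ, hτ, hmax⟩ := (hV.2 s).1
  obtain ⟨π, hπ0, hπ, h | h⟩ :=
    exists_run_le_playValue_or_ne_none hσ hτ hnone hstep i (some s)
  · exact h.trans (hmax.le ⟨π, ⟨hπ0, hπ⟩, rfl⟩)
  · obtain ⟨ρ, hρ, htop⟩ :=
      IsPlay.exists_playValue_eq_top hreas hτ ⟨hπ0, hπ⟩ fun j hj => h j (hj.trans hi)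
    rw [Prof.eq_top_of_top_le (hmax.le ⟨ρ, hρ, htop.symm⟩)]
    exact Prof.le_top _

end BellmanFord

/-- **Lemma 2.** For a reasonable strategy `σ`, the valuation `𝒱_σ` is the
limit of the decreasing sequence `F_σ^i[𝒱_⊥]` (with `𝒱_⊥(⊥) = ō`, `𝒱_⊥(s) = ∞`), and the
limit is reached after at most `|V|` iterations. -/
theorem valuation_is_bellman_ford_limit {V : Type} {d : ℕ} [Fintype V] (A : PGA V d)
    (σ : V → Option V → Prop) (Vσ : Option V → Prof d)
    (hσ : Strategy0 A σ) (hreas : Reasonable A σ) (hV : IsValuation A σ Vσ)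
    (W : ℕ → Option V → Prof d)
    (h0bot : W 0 none = .fin 0) (h0 : ∀ s : V, W 0 (some s) = .top)
    (hstep : ∀ i, IsStep A σ (W i) (W (i + 1))) :
    (∀ i x, Prof.Le (W (i + 1) x) (W i x)) ∧
    (∀ i, Fintype.card V ≤ i → ∀ x, W i x = Vσ x) := by
  have hnone : ∀ i, W i none = .fin 0 := by
    rintro (_ | i)
    exacts [h0bot, (hstep i).1]
  have hanti : ∀ i x, W (i + 1) x ≤ W i x := by
    intro i
    induction i with
    | zero =>
      rintro (_ | s)
      exacts [(hnone 1).trans h0bot.symm |>.le, h0 s ▸ Prof.le_top _]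
    | succ i ih => exact (hstep (i + 1)).mono (hstep i) ih
  have hnb : ∀ i x, W i x ≠ .bot := by
    intro i
    induction i with
    | zero => rintro (_ | s) <;> simp [h0bot, h0]
    | succ i ih => exact (hstep i).ne_bot ih
  refine ⟨hanti, fun i hi => ?_⟩
  rintro (_ | s)
  · rw [hnone, hV.1]
  · exact le_antisymm (hV.iterate_le hσ hreas hnone hstep hi s)
      (hV.le_of_isStep_le hσ hreas (hstep i) (hanti i) (hnone i) (hnb i) s)
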